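/- Let k be a positive integer. The relation ≺ on P_k (p' ≺ p iff p' is an admissible prefix of p) is a partial order: it is reflexive, antisymmetric and transitive. Moreover, for all p, p' ∈ P_k, p' ≺ p implies p' ≤ p in the geodesic order. -/

import Mathlib

open Sum
open scoped Classical

noncomputable section

namespace PartitionPaper

variable {X : Type*}

/-- The number of blocks of a partition of `X`, encoded as a setoid on `X`. -/
def nc (p : Setoid X) : ℕ := Nat.card (Quotient p)

/-- The geodesic distance `d(p,p') = (nc p + nc p')/2 - nc (p ⊔ p')`. -/
def pdist (p q : Setoid X) : ℚ :=
  ((nc p : ℚ) + (nc q : ℚ)) / 2 - (nc (p ⊔ q) : ℚ)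

/-- Geodesic order with base partition `b` : `p' ≤_b p`. -/
def geoLE (b p' p : Setoid X) : Prop := pdist b p' + pdist p' p = pdist b p

/-- Coarser-compatible order `p' ⊣_b p` : `p'` coarser than `p` and
`nc (p' ⊔ b) = nc (p ⊔ b)`.  (In the setoid lattice, `p ≤ p'` means `p` is finer.) -/
def coarserComp (b p' p : Setoid X) : Prop :=
  p ≤ p' ∧ nc (p' ⊔ b) = nc (p ⊔ b)

/-- Finer-compatible order `p' ⊐_b p` : `p'` finer than `p` and
`nc p' - nc (p' ⊔ b) = nc p - nc (p ⊔ b)`. -/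
def finerComp (b p' p : Setoid X) : Prop :=
  p' ≤ p ∧ (nc p' : ℤ) - (nc (p' ⊔ b) : ℤ) = (nc p : ℤ) - (nc (p ⊔ b) : ℤ)

/-- `p'` is obtained from `p` by gluing two blocks of `p` into one. -/
def IsGluing (p p' : Setoid X) : Prop := p ≤ p' ∧ nc p' + 1 = nc p

/-- The Cayley graph on partitions of `X`: an edge iff one partition is obtained
from the other by gluing two of its blocks into one. -/
def glueGraph (X : Type*) : SimpleGraph (Setoid X) where
  Adj p q := IsGluing p q ∨ IsGluing q p
  symm := ⟨fun _ _ h => h.elim Or.inr Or.inl⟩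
  loopless := ⟨by
    intro p h
    rcases h with ⟨-, h⟩ | ⟨-, h⟩ <;> omega⟩

/-- The segment `[p₁, p₂]` for the geodesic distance. -/
def seg (p₁ p₂ : Setoid X) : Set (Setoid X) :=
  {p | pdist p₁ p + pdist p p₂ = pdist p₁ p₂}

/-- The defect of `p'` from being on `[b, p]`. -/
def df (b p' p : Setoid X) : ℚ := pdist b p' + pdist p' p - pdist b p

/-- Admissible one-step splits: `p'` is obtained by cutting a (pivotal) block of `p`
into two blocks in such a way that the join with `b` gains one block. -/
def Delta (b p : Setoid X) : Set (Setoid X) :=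
  {p' | p' ≤ p ∧ nc p' = nc p + 1 ∧ nc (p' ⊔ b) = nc (p ⊔ b) + 1}

/-- The admissible splits `Sp_b(p) = ⋃ₘ Δ_b^m(p)`. -/
def Sp (b p : Setoid X) : Set (Setoid X) :=
  {p' | Relation.ReflTransGen (fun u v => v ∈ Delta b u) p p'}

/-- The admissible gluings `Gl_b(p)`: partitions obtained by gluing blocks of `p`
without altering the number of blocks of the join with `b`. -/
def Gl (b p : Setoid X) : Set (Setoid X) :=
  {p' | p ≤ p' ∧ nc (p' ⊔ b) = nc (p ⊔ b)}

/-- `p'` is directly smaller than `p` for the relation `r`. -/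
def DirectlySmaller (r : Setoid X → Setoid X → Prop) (p' p : Setoid X) : Prop :=
  r p' p ∧ p' ≠ p ∧ ¬ ∃ p'', p'' ≠ p ∧ p'' ≠ p' ∧ r p' p'' ∧ r p'' p

/-- The block of the partition `p` corresponding to a class `c`. -/
def blockSet (p : Setoid X) (c : Quotient p) : Set X := {x | Quotient.mk p x = c}

/-- The number of blocks of `q` contained in the block `c` of `p`. -/
def numSubBlocks (q p : Setoid X) (c : Quotient p) : ℕ :=
  Nat.card {d : Quotient q // blockSet q d ⊆ blockSet p c}

/-- The number of blocks of `p` containing exactly `i` blocks of `q`. -/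
def rcount (q p : Setoid X) (i : ℕ) : ℕ :=
  Nat.card {c : Quotient p // numSubBlocks q p c = i}

/-- The Möbius function of the refinement order:
`μ_f(q,p) = (-1)^(nc q - nc p) ∏_i ((i-1)!)^(r_i)` for `q` finer than `p`. -/
def muf (q p : Setoid X) : ℤ :=
  (-1) ^ (nc q - nc p) *
    ∏ i ∈ Finset.range (nc q + 1), ((Nat.factorial (i - 1) : ℤ)) ^ (rcount q p i)

/-- `P_k`: partitions of `{1,…,k} ∪ {1',…,k'}`, the left summand being the
unprimed (top) row and the right summand the primed (bottom) row. -/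
abbrev Pk (k : ℕ) := Setoid (Fin k ⊕ Fin k)

/-- The identity partition `id_k = {{i, i'} : 1 ≤ i ≤ k}`. -/
def idk (k : ℕ) : Pk k := Setoid.ker (Sum.elim id id)

/-- The permutation partition associated with `σ`, with blocks `{i, σ(i)'}`. -/
def permPartition {k : ℕ} (σ : Equiv.Perm (Fin k)) : Pk k :=
  Setoid.ker (Sum.elim id σ.symm)

/-- `S_k`, the set of permutation partitions. -/
def Sk (k : ℕ) : Set (Pk k) := Set.range (permPartition (k := k))

/-- `B_k`, the set of Brauer partitions: all blocks have exactly two elements. -/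
def Bk (k : ℕ) : Set (Pk k) := {p | ∀ x, Nat.card {y | p.r x y} = 2}

/-- Embedding of the top/bottom rows of the upper diagram `q` into the
three-row diagram (top ⊕ (middle ⊕ bottom)). -/
def upMap (k : ℕ) : Fin k ⊕ Fin k → Fin k ⊕ (Fin k ⊕ Fin k) :=
  Sum.elim Sum.inl (fun i => Sum.inr (Sum.inl i))

/-- Embedding of the top/bottom rows of the lower diagram `p` into the
three-row diagram. -/
def downMap (k : ℕ) : Fin k ⊕ Fin k → Fin k ⊕ (Fin k ⊕ Fin k) :=
  Sum.elim (fun i => Sum.inr (Sum.inl i)) (fun i => Sum.inr (Sum.inr i))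

/-- The partition of the three-row diagram obtained by stacking a diagram of `q`
on top of a diagram of `p` (identifying the bottom row of `q` with the top row
of `p`): the equivalence relation generated by the copies of `q` and `p`. -/
def stackSetoid {k : ℕ} (p q : Pk k) : Setoid (Fin k ⊕ (Fin k ⊕ Fin k)) :=
  sInf {s | ∀ x y,
    ((∃ a b, upMap k a = x ∧ upMap k b = y ∧ q.r a b) ∨
     (∃ a b, downMap k a = x ∧ downMap k b = y ∧ p.r a b)) → s.r x y}

/-- The composition `p ∘ q` (a diagram of `q` stacked above a diagram of `p`),
obtained by restricting the stacked partition to the outer rows. -/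
def comp {k : ℕ} (p q : Pk k) : Pk k :=
  Setoid.comap (Sum.elim Sum.inl (fun i => Sum.inr (Sum.inr i))) (stackSetoid p q)

/-- `κ(p,q)`: the number of connected components of the stacked diagram entirely
contained in the middle row. -/
def kappaP {k : ℕ} (p q : Pk k) : ℕ :=
  Nat.card {c : Quotient (stackSetoid p q) //
    ∀ x, Quotient.mk (stackSetoid p q) x = c → ∃ i : Fin k, x = Sum.inr (Sum.inl i)}

/-- The transpose `ᵗp`, exchanging the two rows. -/
def transpose {k : ℕ} (p : Pk k) : Pk k := Setoid.comap Sum.swap p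

/-- The disjoint-union partition on a sum type. -/
def sumSetoid {α β : Type*} (p : Setoid α) (q : Setoid β) : Setoid (α ⊕ β) :=
  Setoid.ker (Sum.map (Quotient.mk p) (Quotient.mk q))

/-- Reindexing of the rows for the tensor product. -/
def reindex (k l : ℕ) :
    Fin (k + l) ⊕ Fin (k + l) → (Fin k ⊕ Fin k) ⊕ (Fin l ⊕ Fin l) :=
  Sum.elim
    (fun j => Sum.elim (fun a => Sum.inl (Sum.inl a)) (fun b => Sum.inr (Sum.inl b))
      (finSumFinEquiv.symm j))
    (fun j => Sum.elim (fun a => Sum.inl (Sum.inr a)) (fun b => Sum.inr (Sum.inr b))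
      (finSumFinEquiv.symm j))

/-- The tensor product `p ⊗ q ∈ P_{k+l}`: a diagram of `p` placed to the left of
a diagram of `q`. -/
def tensor {k l : ℕ} (p : Pk k) (q : Pk l) : Pk (k + l) :=
  Setoid.comap (reindex k l) (sumSetoid p q)

/-- The `≺`-defect `η(p,q)`. -/
def eta {k : ℕ} (p q : Pk k) : ℚ :=
  pdist (idk k) p + pdist (idk k) q - pdist (idk k) (comp p q)
    - ((k : ℚ) + (nc (comp p q) : ℚ) - (nc p : ℚ) - (nc q : ℚ)) / 2 - (kappaP p q : ℚ)

/-- The Kreweras complement of `p'` in `p`: the set of `p''` with `p = p' ∘ p''`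
realizing equality in the `≺`-defect inequality. -/
def Krew {k : ℕ} (p p' : Pk k) : Set (Pk k) :=
  {p'' | comp p' p'' = p ∧ eta p' p'' = 0}

/-- `p' ≺ p` : `p'` is an admissible prefix of `p`. -/
def prec {k : ℕ} (p' p : Pk k) : Prop :=
  ∃ p'', comp p' p'' = p ∧ eta p' p'' = 0

/-- The partition of `{1,…,k}` into the orbits (cycles) of the permutation `σ`. -/
def cycleSetoid {k : ℕ} (σ : Equiv.Perm (Fin k)) : Setoid (Fin k) :=
  ⟨σ.SameCycle,
    ⟨fun x => Equiv.Perm.SameCycle.refl σ x, fun h => h.symm, fun h₁ h₂ => h₁.trans h₂⟩⟩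

/-- A partition of `{1,…,k}` is non-crossing if there are no `a < b < c < d` with
`a, c` in one block and `b, d` in a different block. -/
def NonCrossing {k : ℕ} (π : Setoid (Fin k)) : Prop :=
  ¬ ∃ a b c d : Fin k, a < b ∧ b < c ∧ c < d ∧ π.r a c ∧ π.r b d ∧ ¬ π.r a b

/-- The map sending a permutation partition to the partition of `{1,…,k}` into
the orbits of the corresponding bijection (the blocks of `p ⊔ id_k` restricted
to the top row). -/
def orbitMap {k : ℕ} (p : Pk k) : Setoid (Fin k) :=
  Setoid.comap (Sum.inl : Fin k → Fin k ⊕ Fin k) (p ⊔ idk k)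

/-- The permutation `(1,k+1)(2,k+2)⋯(k,2k)` of `{1,…,2k}`. -/
def tauPerm (k : ℕ) : Equiv.Perm (Fin (k + k)) :=
  (finSumFinEquiv.symm.trans (Equiv.sumComm (Fin k) (Fin k))).trans finSumFinEquiv

/-- The left part of a partition in `P_{k₁+k₂}`. -/
def leftPart {k₁ k₂ : ℕ} (p : Pk (k₁ + k₂)) : Pk k₁ :=
  Setoid.comap (Sum.map (Fin.castAdd k₂) (Fin.castAdd k₂)) p

/-- The right part of a partition in `P_{k₁+k₂}`. -/
def rightPart {k₁ k₂ : ℕ} (p : Pk (k₁ + k₂)) : Pk k₂ :=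
  Setoid.comap (Sum.map (Fin.natAdd k₁) (Fin.natAdd k₁)) p

/-- The `p`-moment `m_p(E_N) = Tr_N(E_N ᵗp)/N^{nc(p ⊔ id_k)}
`= ∑_{p'} (E_N)_{p'} N^{nc(p ⊔ p') - nc(p ⊔ id_k)}`. -/
def momentF {k : ℕ} (E : ℕ → Pk k → ℂ) (p : Pk k) (N : ℕ) : ℂ :=
  ∑ᶠ p' : Pk k, E N p' * (N : ℂ) ^ ((nc (p ⊔ p') : ℤ) - (nc (p ⊔ idk k) : ℤ))

/-- The `p`-cumulant `κ_p(E_N) = N^{nc p - nc (p ⊔ id_k)} (E_N)_p`. -/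
def cumulantF {k : ℕ} (E : ℕ → Pk k → ℂ) (p : Pk k) (N : ℕ) : ℂ :=
  (N : ℂ) ^ ((nc p : ℤ) - (nc (p ⊔ idk k) : ℤ)) * E N p

/-!
In integer form `η(p,q) = nc p + nc q + nc (id_k ⊔ p∘q) - nc S - nc (id_k ⊔ p) - nc (id_k ⊔ q)`,
where `S` is the three-row partition of the stacked diagram and `nc S = nc (p∘q) + κ(p,q)`.
Everything follows from submodularity of `nc` on the partition lattice,
`nc (x ⊔ y) + nc (x ⊔ z) ≤ nc x + nc (x ⊔ y ⊔ z)`, applied inside stacked diagrams in which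
the copies of `id_k` join every middle point to an outer one:

* `η ≥ 0`, and if `η(p',p'') = 0` then `d(id_k,p') + d(p',p'∘p'') ≤ d(id_k,p'∘p'')`; with the
  triangle inequality this puts `p'` on a geodesic from `id_k` to `p'∘p''`, and antisymmetry
  follows because `d` separates points;
* `p ∘ id_k = p` with `η(p,id_k) = 0` gives reflexivity;
* in the four-row diagram of `p, c, c'` both `(p∘c)∘c'` and `p∘(c∘c')` are restrictions of the
  same partition, so composition is associative, and counting its blocks gives
  `η(p,c∘c') + η(c,c') ≤ η(p,c) + η(p∘c,c')`; since `η ≥ 0`, zero defects compose.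
-/

open Function

variable {Y : Type*}

namespace Setoid

theorem gc_map_comap (f : Y → X) :
    GaloisConnection (fun s : Setoid Y => s.map f) (Setoid.comap f) :=
  fun _ _ => ⟨fun h => Setoid.le_comap_map.trans fun _ _ hr => h hr,
    fun h => Setoid.eqvGen_le (by rintro _ _ ⟨a, b, hab, rfl, rfl⟩; exact h hab)⟩

theorem map_le_iff_le_comap {f : Y → X} {s : Setoid Y} {t : Setoid X} :
    s.map f ≤ t ↔ s ≤ t.comap f :=
  gc_map_comap f s t

theorem map_sup (f : Y → X) (s t : Setoid Y) : (s ⊔ t).map f = s.map f ⊔ t.map f :=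
  (gc_map_comap f).l_sup

theorem map_map {Z : Type*} (f : Y → Z) (g : Z → X) (s : Setoid Y) :
    (s.map f).map g = s.map (g ∘ f) :=
  ((gc_map_comap f).compose (gc_map_comap g)).l_unique (gc_map_comap (g ∘ f)) fun _ => rfl

theorem map_rel_iff {f : Y → X} (hf : Injective f) {s : Setoid Y} {x y : X} :
    s.map f x y ↔ (∃ a b, s a b ∧ f a = x ∧ f b = y) ∨ x = y := by
  rw [Setoid.coe_map_of_ker_le s f fun a b h => hf h ▸ s.refl' a]
  rfl

end Setoid

def ncOff (s : Setoid X) (R : Set X) : ℕ :=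
  Nat.card {c : Quotient s // ∀ x, Quotient.mk s x = c → x ∉ R}

theorem nc_le_nc_of_le [Finite X] {s t : Setoid X} (h : s ≤ t) : nc t ≤ nc s :=
  Nat.card_le_card_of_surjective
    (Quotient.lift (Quotient.mk t) fun _ _ hr => Quotient.sound (h hr))
    (Quotient.ind fun a => ⟨Quotient.mk s a, rfl⟩)

theorem eq_of_le_of_nc_le [Finite X] {s t : Setoid X} (h : s ≤ t) (hn : nc s ≤ nc t) :
    s = t := by
  let q : Quotient s → Quotient t :=
    Quotient.lift (Quotient.mk t) fun _ _ hr => Quotient.sound (h hr)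
  have hq : Surjective q := Quotient.ind fun a => ⟨Quotient.mk s a, rfl⟩
  refine le_antisymm h fun a b hab => Quotient.exact ((hq.bijective_of_nat_card_le hn).1 ?_)
  exact Quotient.sound hab

theorem nc_le_nc_comap [Finite Y] {f : Y → X} {s : Setoid X} (h : ∀ x, ∃ y, s x (f y)) :
    nc s ≤ nc (s.comap f) :=
  Nat.card_le_card_of_surjective
    (Quotient.lift (fun y => Quotient.mk s (f y)) fun _ _ h => Quotient.sound h)
    (Quotient.ind fun x => (h x).elim fun y hy => ⟨Quotient.mk _ y, (Quotient.sound hy).symm⟩)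

theorem nc_eq_nc_comap_add_ncOff [Finite X] (f : Y → X) (s : Setoid X) :
    nc s = nc (s.comap f) + ncOff s (Set.range f) := by
  have hoff : ncOff s (Set.range f) = Nat.card {c // c ∉ Set.range (Quotient.mk s ∘ f)} := by
    refine Nat.card_congr (Equiv.subtypeEquivRight fun c => ?_)
    simp only [Set.mem_range, comp_apply, not_exists]
    exact ⟨fun h y hy => h _ hy y rfl, fun h x hx y hy => h y (hy ▸ hx)⟩
  rw [hoff, nc, nc, Nat.card_congr (Setoid.comapQuotientEquiv f s)]
  exact (Nat.card_congr (Equiv.sumCompl _)).symm.trans (Nat.card_sum ..)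

theorem ncOff_le_ncOff [Finite Y] {g : Y → X} {s : Setoid Y} {t : Setoid X}
    {R : Set X} {S : Set Y} (hst : s ≤ t.comap g) (hS : ∀ y ∈ S, g y ∈ R)
    (hR : ∀ x ∉ R, x ∈ Set.range g) :
    ncOff t R ≤ ncOff s S := by
  have hrep : ∀ c : {c : Quotient t // ∀ x, Quotient.mk t x = c → x ∉ R},
      ∃ y, Quotient.mk t (g y) = c.1 := fun c => by
    obtain ⟨y, hy⟩ := hR _ (c.2 _ c.1.out_eq)
    exact ⟨y, hy ▸ c.1.out_eq⟩
  choose rep hrep using hrep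
  refine Nat.card_le_card_of_injective (fun c => ⟨Quotient.mk s (rep c), fun y hy hyS => ?_⟩) ?_
  · exact c.2 _ ((Quotient.sound (s := t) (hst (Quotient.exact hy))).trans (hrep c)) (hS y hyS)
  · intro c d hcd
    apply Subtype.ext
    rw [← hrep c, ← hrep d]
    exact Quotient.sound (hst (Quotient.exact (congrArg Subtype.val hcd)))

theorem nc_map [Finite X] [Finite Y] {f : Y → X} (hf : Injective f) (s : Setoid Y) :
    nc (s.map f) + Nat.card Y = nc s + Nat.card X := by
  have hoff : ncOff (s.map f) (Set.range f) = Nat.card {x // x ∉ Set.range f} := by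
    have hsing : ∀ {x y}, x ∉ Set.range f → s.map f y x → y = x := fun hx h => by
      rcases (Setoid.map_rel_iff hf).1 h with ⟨a, b, -, -, rfl⟩ | h
      · exact absurd ⟨b, rfl⟩ hx
      · exact h
    let e : {x // x ∉ Set.range f} →
        {c : Quotient (s.map f) // ∀ x, ⟦x⟧ = c → x ∉ Set.range f} :=
      fun x => ⟨Quotient.mk _ x.1, fun y hy => hsing x.2 (Quotient.exact hy) ▸ x.2⟩
    refine (Nat.card_congr (Equiv.ofBijective e ⟨fun x y hxy => Subtype.ext ?_,
      fun c => ⟨⟨c.1.out, c.2 _ c.1.out_eq⟩, Subtype.ext c.1.out_eq⟩⟩)).symm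
    exact hsing y.2 (Quotient.exact (congrArg Subtype.val hxy))
  have hcard : Nat.card Y + Nat.card {x // x ∉ Set.range f} = Nat.card X := by
    rw [← Nat.card_range_of_injective hf, ← Nat.card_sum]
    exact Nat.card_congr (Equiv.sumCompl _)
  rw [nc_eq_nc_comap_add_ncOff f, Setoid.comap_map_eq f s hf, hoff, ← hcard]
  ring


def pairSetoid (a b : X) : Setoid X := Relation.EqvGen.setoid fun x y => x = a ∧ y = b

theorem pairSetoid_le {a b : X} {u : Setoid X} (h : u a b) : pairSetoid a b ≤ u :=
  Setoid.eqvGen_le fun _ _ ⟨hx, hy⟩ => hx ▸ hy ▸ h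

theorem sup_pairSetoid_eq_ker (u : Setoid X) (a b : X) :
    u ⊔ pairSetoid a b =
      Setoid.ker fun x => if u x b then Quotient.mk u a else Quotient.mk u x := by
  apply le_antisymm
  · refine sup_le (fun x y hxy => ?_) (Setoid.eqvGen_le ?_)
    · have hb : u x b ↔ u y b := ⟨u.trans' (u.symm' hxy), u.trans' hxy⟩
      simp only [Setoid.ker_def, hb]
      split_ifs
      · rfl
      · exact Quotient.sound hxy
    · rintro _ _ ⟨rfl, rfl⟩
      simp only [Setoid.ker_def, if_pos (u.refl' _), ite_self]
  · intro x y hxy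
    set w := u ⊔ pairSetoid a b
    have hab : w a b :=
      (le_sup_right : pairSetoid a b ≤ w) (Relation.EqvGen.rel _ _ ⟨rfl, rfl⟩)
    have hu : u ≤ w := le_sup_left
    rw [Setoid.ker_def] at hxy
    split_ifs at hxy with hx hy hy
    · exact w.trans' (hu hx) (hu (u.symm' hy))
    · exact w.trans' (hu hx) (w.trans' (w.symm' hab) (hu (Quotient.exact hxy)))
    · exact w.trans' (hu (Quotient.exact hxy)) (w.trans' hab (hu (u.symm' hy)))
    · exact hu (Quotient.exact hxy)

theorem nc_sup_pairSetoid_add_one [Finite X] {u : Setoid X} {a b : X} (hab : ¬ u a b) :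
    nc (u ⊔ pairSetoid a b) + 1 = nc u := by
  set g : X → Quotient u := fun x => if u x b then Quotient.mk u a else Quotient.mk u x
  have hnc : nc (u ⊔ pairSetoid a b) = Nat.card (Set.range g) := by
    rw [sup_pairSetoid_eq_ker, nc]
    exact Nat.card_congr (Setoid.quotientKerEquivRange g)
  have hsplit : Nat.card (Set.range g) + Nat.card {c // c ∉ Set.range g} = nc u :=
    (Nat.card_sum ..).symm.trans (Nat.card_congr (Equiv.sumCompl _))
  have hrange : ∀ c, c ≠ Quotient.mk u b → c ∈ Set.range g := Quotient.ind fun x hx =>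
    ⟨x, if_neg fun h => hx (Quotient.sound h)⟩
  have hle : Nat.card {c // c ∉ Set.range g} ≤ 1 := by
    refine Finite.card_le_one_iff_subsingleton.2 ⟨fun c d => Subtype.ext ?_⟩
    exact (not_not.1 (mt (hrange c) c.2)).trans (not_not.1 (mt (hrange d) d.2)).symm
  have hb : Quotient.mk u b ∉ Set.range g := by
    rintro ⟨x, hx⟩
    by_cases hxb : u x b
    · exact hab (Quotient.exact ((if_pos hxb).symm.trans hx))
    · exact hxb (Quotient.exact ((if_neg hxb).symm.trans hx))
  have hpos : 0 < Nat.card {c // c ∉ Set.range g} :=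
    Nat.card_pos_iff.2 ⟨⟨_, hb⟩, inferInstance⟩
  omega

theorem nc_sup_pairSetoid_add_le [Finite X] (x z : Setoid X) (a b : X) :
    nc (x ⊔ pairSetoid a b) + nc (x ⊔ z) ≤ nc x + nc (x ⊔ z ⊔ pairSetoid a b) := by
  by_cases hx : x a b
  · rw [sup_eq_left.2 (pairSetoid_le hx),
      sup_eq_left.2 (pairSetoid_le (le_sup_left (b := z) hx))]
  have h₁ := nc_sup_pairSetoid_add_one hx
  by_cases hxz : (x ⊔ z) a b
  · rw [sup_eq_left.2 (pairSetoid_le hxz)]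
    omega
  · have h₂ := nc_sup_pairSetoid_add_one hxz
    omega

theorem nc_sup_add_nc_sup_le [Finite X] (x y z : Setoid X) :
    nc (x ⊔ y) + nc (x ⊔ z) ≤ nc x + nc (x ⊔ y ⊔ z) := by
  have := Fintype.ofFinite X
  let pair : X × X → Setoid X := fun ab => pairSetoid ab.1 ab.2
  have hy : y = (Finset.univ.filter fun ab : X × X => y ab.1 ab.2).sup pair := by
    refine le_antisymm (fun a b hab => ?_) (Finset.sup_le fun ab hab => pairSetoid_le ?_)
    · exact Finset.le_sup (f := pair) (Finset.mem_filter.2 ⟨Finset.mem_univ (a, b), hab⟩)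
        (Relation.EqvGen.rel _ _ ⟨rfl, rfl⟩)
    · exact (Finset.mem_filter.1 hab).2
  rw [hy]
  generalize Finset.univ.filter (fun ab : X × X => y ab.1 ab.2) = pairs
  induction pairs using Finset.induction_on generalizing x with
  | empty => simp
  | insert ab s _ ih =>
    have h₁ := ih (x ⊔ pair ab)
    have h₂ : nc (x ⊔ pair ab) + nc (x ⊔ z) ≤ nc x + nc (x ⊔ pair ab ⊔ z) :=
      sup_right_comm x z (pair ab) ▸ nc_sup_pairSetoid_add_le x z ab.1 ab.2
    rw [Finset.sup_insert, ← sup_assoc]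
    omega

theorem pdist_comm (p q : Setoid X) : pdist p q = pdist q p := by
  rw [pdist, pdist, sup_comm, add_comm]

theorem pdist_le_pdist_add_pdist [Finite X] (b p' p : Setoid X) :
    pdist b p ≤ pdist b p' + pdist p' p := by
  have hsub := nc_sup_add_nc_sup_le p' b p
  have hmono : nc (b ⊔ p) ≥ nc (p' ⊔ b ⊔ p) :=
    nc_le_nc_of_le (sup_le (le_sup_right.trans le_sup_left) le_sup_right)
  have : (nc (b ⊔ p') : ℚ) + nc (p' ⊔ p) ≤ nc p' + nc (b ⊔ p) := by
    rw [sup_comm b p']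
    exact_mod_cast hsub.trans (by omega)
  simp only [pdist]
  linarith

theorem eq_of_pdist_eq_zero [Finite X] {p q : Setoid X} (h : pdist p q = 0) : p = q := by
  have hp := nc_le_nc_of_le (le_sup_left : p ≤ p ⊔ q)
  have hq := nc_le_nc_of_le (le_sup_right : q ≤ p ⊔ q)
  have hsum : nc p + nc q = 2 * nc (p ⊔ q) := by
    rw [pdist, sub_eq_zero] at h
    exact_mod_cast
      (by push_cast; linarith : ((nc p + nc q : ℕ) : ℚ) = ((2 * nc (p ⊔ q) : ℕ) : ℚ))
  exact (eq_of_le_of_nc_le le_sup_left (by omega)).trans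
    (eq_of_le_of_nc_le le_sup_right (by omega)).symm

namespace Setoid

theorem comap_mono {f : Y → X} {s t : Setoid X} (h : s ≤ t) : s.comap f ≤ t.comap f :=
  fun _ _ hr => h hr

/-- Restricting to the range of `f` commutes with joining a partition supported on that range:
in a chain of `s.map f`- and `V`-steps between points of `range f`, every `V`-step starts and
ends in `range f`. -/
theorem comap_map_sup (f : Y → X) (s : Setoid Y) (V : Setoid X) :
    (s.map f ⊔ V).comap f = s ⊔ V.comap f := by
  set K := s ⊔ V.comap f
  let Z : Setoid X :=
    { r := fun x y => V x y ∨ ∃ a b, V x (f a) ∧ K a b ∧ V (f b) y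
      iseqv := by
        refine ⟨fun x => .inl (V.refl' x), ?_, ?_⟩
        · rintro x y (h | ⟨a, b, hxa, hab, hby⟩)
          · exact .inl (V.symm' h)
          · exact .inr ⟨b, a, V.symm' hby, K.symm' hab, V.symm' hxa⟩
        · rintro x y z (h | ⟨a, b, hxa, hab, hby⟩) (h' | ⟨c, d, hyc, hcd, hdz⟩)
          · exact .inl (V.trans' h h')
          · exact .inr ⟨c, d, V.trans' h hyc, hcd, hdz⟩
          · exact .inr ⟨a, b, hxa, hab, V.trans' hby h'⟩
          · have hbc : K b c := (le_sup_right : V.comap f ≤ K) (V.trans' hby hyc)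
            exact .inr ⟨a, d, hxa, K.trans' hab (K.trans' hbc hcd), hdz⟩ }
  refine le_antisymm (fun x y hxy => ?_)
    (sup_le (Setoid.le_comap_map.trans (comap_mono le_sup_left)) (comap_mono le_sup_right))
  have hZ : s.map f ⊔ V ≤ Z := sup_le
    (map_le_iff_le_comap.2 fun a b hab => .inr ⟨a, b, V.refl' _, le_sup_left (b := V.comap f) hab,
      V.refl' _⟩) fun _ _ => .inl
  rcases hZ hxy with h | ⟨a, b, hxa, hab, hby⟩
  · exact (le_sup_right : V.comap f ≤ K) h
  · exact K.trans' ((le_sup_right : V.comap f ≤ K) hxa) (K.trans' hab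
      ((le_sup_right : V.comap f ≤ K) hby))

theorem comap_map_of_pullback {Z W : Type*} {F : Y → X} {G : Z → X} {φ : W → Y}
    {ψ : W → Z} (hF : Injective F) (hG : Injective G) (hcomm : F ∘ φ = G ∘ ψ)
    (hpb : ∀ a b, G a = F b → ∃ c, ψ c = a ∧ φ c = b) (s : Setoid Z) :
    (s.map G).comap F = (s.comap ψ).map φ := by
  refine le_antisymm (fun x y hxy => ?_) (map_le_iff_le_comap.2 fun a b hab => ?_)
  · rcases (map_rel_iff hG).1 hxy with ⟨a, b, hab, ha, hb⟩ | h
    · obtain ⟨c, rfl, rfl⟩ := hpb a x ha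
      obtain ⟨d, rfl, rfl⟩ := hpb b y hb
      exact Setoid.le_comap_map hab
    · exact hF h ▸ Setoid.refl' _ x
  · change s.map G (F (φ a)) (F (φ b))
    rw [← comp_apply (f := F), ← comp_apply (f := F), hcomm]
    exact Setoid.le_comap_map hab

end Setoid

variable {k : ℕ}

def outMap (k : ℕ) : Fin k ⊕ Fin k → Fin k ⊕ (Fin k ⊕ Fin k) :=
  Sum.elim Sum.inl fun i => Sum.inr (Sum.inr i)

theorem comp_eq_comap (p q : Pk k) : comp p q = (stackSetoid p q).comap (outMap k) := rfl

theorem upMap_injective : Injective (upMap k) := by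
  rintro (i | i) (j | j) h <;> simp_all [upMap]

theorem downMap_injective : Injective (downMap k) := by
  rintro (i | i) (j | j) h <;> simp_all [downMap]

theorem stackSetoid_eq (p q : Pk k) : stackSetoid p q = q.map (upMap k) ⊔ p.map (downMap k) := by
  refine le_antisymm (sInf_le ?_) (sup_le (le_sInf fun s hs => ?_) (le_sInf fun s hs => ?_))
  · rintro _ _ (⟨a, b, rfl, rfl, h⟩ | ⟨a, b, rfl, rfl, h⟩)
    · exact le_sup_left (b := p.map (downMap k)) (Setoid.le_comap_map h)
    · exact le_sup_right (a := q.map (upMap k)) (Setoid.le_comap_map h)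
  · exact Setoid.map_le_iff_le_comap.2 fun a b h => hs _ _ (.inl ⟨a, b, rfl, rfl, h⟩)
  · exact Setoid.map_le_iff_le_comap.2 fun a b h => hs _ _ (.inr ⟨a, b, rfl, rfl, h⟩)

theorem nc_idk : nc (idk k) = k := by
  have hs : Surjective (Sum.elim (id : Fin k → Fin k) id) := fun i => ⟨inl i, rfl⟩
  rw [idk, nc, Nat.card_congr (Setoid.quotientKerEquivOfSurjective _ hs), Nat.card_fin]

theorem kappaP_eq_ncOff (p q : Pk k) :
    kappaP p q = ncOff (stackSetoid p q) (Set.range (outMap k)) := by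
  have hmid : ∀ x, (∃ i : Fin k, x = inr (inl i)) ↔ x ∉ Set.range (outMap k) := by
    rintro (i | i | i) <;> simp [outMap]
  exact Nat.card_congr (Equiv.subtypeEquivRight fun c => forall_congr' fun x => by rw [hmid])

theorem nc_stackSetoid (p q : Pk k) : nc (stackSetoid p q) = nc (comp p q) + kappaP p q := by
  rw [kappaP_eq_ncOff, comp_eq_comap]
  exact nc_eq_nc_comap_add_ncOff _ _

theorem eta_eq (p q : Pk k) :
    eta p q = (((nc p + nc q + nc (idk k ⊔ comp p q) : ℤ) - nc (stackSetoid p q)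
      - nc (idk k ⊔ p) - nc (idk k ⊔ q) : ℤ) : ℚ) := by
  rw [eta, pdist, pdist, pdist, nc_idk, nc_stackSetoid]
  push_cast
  ring

section ThreeRows

variable {T : Setoid (Fin k ⊕ (Fin k ⊕ Fin k))}

theorem rel_outMap_downMap (hT : (idk k).map (upMap k) ≤ T) (x : Fin k ⊕ Fin k) :
    T (outMap k x) (downMap k x) := by
  rcases x with i | i
  · exact hT (Setoid.le_comap_map (Setoid.ker_def.2 rfl : idk k (inl i) (inr i)))
  · exact T.refl' _

theorem le_comap_outMap (hT : (idk k).map (upMap k) ≤ T) {r : Pk k}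
    (hr : r.map (downMap k) ≤ T) : r ≤ T.comap (outMap k) := fun x y h =>
  T.trans' (rel_outMap_downMap hT x)
    (T.trans' (hr (Setoid.le_comap_map h)) (T.symm' (rel_outMap_downMap hT y)))

theorem nc_le_nc_comap_outMap (hT : (idk k).map (upMap k) ≤ T) :
    nc T ≤ nc (T.comap (outMap k)) := by
  refine nc_le_nc_comap ?_
  rintro (i | i | i)
  · exact ⟨inl i, T.refl' _⟩
  · exact ⟨inl i, T.symm' (rel_outMap_downMap hT (inl i))⟩
  · exact ⟨inr i, T.refl' _⟩

end ThreeRows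

theorem comp_idk (p : Pk k) : comp p (idk k) = p := by
  have hS := stackSetoid_eq p (idk k)
  refine le_antisymm ?_ (le_comap_outMap (hS ▸ le_sup_left) (hS ▸ le_sup_right))
  -- folding the top row onto the middle one, `stackSetoid p (idk k)` becomes a pullback of `p`
  let collapse : Fin k ⊕ (Fin k ⊕ Fin k) → Fin k ⊕ Fin k := Sum.elim inl id
  have hup : ∀ a, collapse (upMap k a) = inl (Sum.elim id id a) := by rintro (i | i) <;> rfl
  have hS_le : stackSetoid p (idk k) ≤ p.comap collapse := by
    rw [hS]
    refine sup_le (Setoid.map_le_iff_le_comap.2 fun a b h => ?_)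
      (Setoid.map_le_iff_le_comap.2 fun a b h => ?_)
    · change p (collapse (upMap k a)) (collapse (upMap k b))
      rw [hup, hup, Setoid.ker_def.1 h]
    · rcases a with i | i <;> rcases b with j | j <;> exact h
  intro x y h
  rcases x with i | i <;> rcases y with j | j <;> exact hS_le h

theorem nc_stackSetoid_idk (p : Pk k) : nc (stackSetoid p (idk k)) = nc p := by
  have hT : (idk k).map (upMap k) ≤ stackSetoid p (idk k) :=
    stackSetoid_eq p (idk k) ▸ le_sup_left
  have hle := nc_le_nc_comap_outMap hT
  rw [← comp_eq_comap, comp_idk] at hle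
  have hge := nc_stackSetoid p (idk k)
  rw [comp_idk] at hge
  omega

theorem prec_refl (p : Pk k) : prec p p := by
  refine ⟨idk k, comp_idk p, ?_⟩
  rw [eta_eq, comp_idk, nc_stackSetoid_idk, sup_idem, nc_idk]
  push_cast
  ring

theorem nc_map_three_rows {f : Fin k ⊕ Fin k → Fin k ⊕ (Fin k ⊕ Fin k)} (hf : Injective f)
    (s : Pk k) : nc (s.map f) = nc s + k := by
  have := nc_map hf s
  simp only [Nat.card_sum, Nat.card_fin] at this
  omega

theorem eta_eq_zero_iff (p q : Pk k) :
    eta p q = 0 ↔ (nc p + nc q + nc (idk k ⊔ comp p q) : ℤ) =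
      nc (stackSetoid p q) + nc (idk k ⊔ p) + nc (idk k ⊔ q) := by
  rw [eta_eq, Int.cast_eq_zero]
  omega

theorem eta_nonneg (p q : Pk k) : 0 ≤ eta p q := by
  set P := p.map (downMap k)
  set Q := q.map (upMap k)
  set M₁ := (idk k).map (upMap k)
  set M₂ := (idk k).map (downMap k)
  have hS : stackSetoid p q = P ⊔ Q := (stackSetoid_eq p q).trans (sup_comm _ _)
  have h₁ := nc_sup_add_nc_sup_le P Q M₂
  have h₂ := nc_sup_add_nc_sup_le Q (P ⊔ M₂) M₁
  rw [show Q ⊔ (P ⊔ M₂) = P ⊔ Q ⊔ M₂ by ac_rfl] at h₂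
  -- every block of the full diagram meets the outer rows, and there it is a union of blocks
  -- of `id_k ⊔ p∘q`
  have hT : nc (P ⊔ Q ⊔ M₂ ⊔ M₁) ≤ nc (idk k ⊔ comp p q) :=
    (nc_le_nc_comap_outMap le_sup_right).trans <| nc_le_nc_of_le <|
      sup_le (le_comap_outMap le_sup_right (le_sup_right.trans le_sup_left))
        (Setoid.comap_mono (hS ▸ le_sup_left.trans le_sup_left))
  have hP : nc P = nc p + k := nc_map_three_rows downMap_injective p
  have hQ : nc Q = nc q + k := nc_map_three_rows upMap_injective q
  have hPM : nc (P ⊔ M₂) = nc (idk k ⊔ p) + k := by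
    rw [← Setoid.map_sup, nc_map_three_rows downMap_injective, sup_comm]
  have hQM : nc (Q ⊔ M₁) = nc (idk k ⊔ q) + k := by
    rw [← Setoid.map_sup, nc_map_three_rows upMap_injective, sup_comm]
  rw [eta_eq, hS]
  exact Int.cast_nonneg (by omega)

theorem nc_stackSetoid_add_le (p' p'' : Pk k) :
    nc (stackSetoid p' p'') + nc (idk k ⊔ p'') ≤ nc p'' + nc (comp p' p'' ⊔ p') := by
  set Q := p''.map (upMap k)
  set A := p'.map (downMap k)
  set M₁ := (idk k).map (upMap k)
  have hS : stackSetoid p' p'' = Q ⊔ A := stackSetoid_eq p' p''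
  have hsub := nc_sup_add_nc_sup_le Q A M₁
  have hT : nc (Q ⊔ A ⊔ M₁) ≤ nc (comp p' p'' ⊔ p') :=
    (nc_le_nc_comap_outMap le_sup_right).trans <| nc_le_nc_of_le <|
      sup_le (Setoid.comap_mono (hS ▸ le_sup_left))
        (le_comap_outMap le_sup_right (le_sup_right.trans le_sup_left))
  have hQ : nc Q = nc p'' + k := nc_map_three_rows upMap_injective p''
  have hQM : nc (Q ⊔ M₁) = nc (idk k ⊔ p'') + k := by
    rw [← Setoid.map_sup, nc_map_three_rows upMap_injective, sup_comm]
  rw [hS]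
  omega

theorem geoLE_of_prec {p' p : Pk k} (h : prec p' p) : geoLE (idk k) p' p := by
  obtain ⟨p'', rfl, hη⟩ := h
  have hη' := (eta_eq_zero_iff p' p'').1 hη
  have hstack := nc_stackSetoid_add_le p' p''
  have hdefect : (nc p' : ℚ) + nc (idk k ⊔ comp p' p'') ≤
      nc (idk k ⊔ p') + nc (p' ⊔ comp p' p'') := by
    rw [sup_comm p']
    exact_mod_cast (by omega : (nc p' : ℤ) + nc (idk k ⊔ comp p' p'') ≤
      nc (idk k ⊔ p') + nc (comp p' p'' ⊔ p'))
  refine le_antisymm ?_ (pdist_le_pdist_add_pdist _ _ _)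
  simp only [pdist]
  linarith

theorem prec_antisymm {p p' : Pk k} (h₁ : prec p' p) (h₂ : prec p p') : p = p' := by
  have g₁ := geoLE_of_prec h₁
  have g₂ := geoLE_of_prec h₂
  rw [geoLE] at g₁ g₂
  exact eq_of_pdist_eq_zero (by linarith [pdist_comm p p'])

theorem stackSetoid_map {X : Type*} (f : Fin k ⊕ (Fin k ⊕ Fin k) → X) (p q : Pk k) :
    (stackSetoid p q).map f = q.map (f ∘ upMap k) ⊔ p.map (f ∘ downMap k) := by
  rw [stackSetoid_eq, Setoid.map_sup, Setoid.map_map, Setoid.map_map]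

theorem comp_eq_comap_map {X : Type*} {f : Fin k ⊕ (Fin k ⊕ Fin k) → X} (hf : Injective f)
    (p q : Pk k) : comp p q = ((stackSetoid p q).map f).comap (f ∘ outMap k) := by
  rw [Setoid.comap_comp, Setoid.comap_map_eq f _ hf, comp_eq_comap]

section Rows

variable {n : ℕ}

/-- `Fin n × Fin k` is a diagram with `n` rows of `k` points; `row2 a b` places a partition of
`P_k` on its rows `a` (unprimed) and `b` (primed). -/
def row2 (a b : Fin n) : Fin k ⊕ Fin k → Fin n × Fin k := Sum.elim (a, ·) (b, ·)

def row3 (a b c : Fin n) : Fin k ⊕ (Fin k ⊕ Fin k) → Fin n × Fin k :=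
  Sum.elim (a, ·) (row2 b c)

theorem row2_injective {a b : Fin n} (hab : a ≠ b) : Injective (row2 (k := k) a b) := by
  rintro (i | i) (j | j) h <;> simp_all [row2, eq_comm]

theorem row3_injective {a b c : Fin n} (hab : a ≠ b) (hac : a ≠ c) (hbc : b ≠ c) :
    Injective (row3 (k := k) a b c) := by
  rintro (i | i | i) (j | j | j) h <;> simp_all [row3, row2, eq_comm]

theorem row3_comp_upMap (a b c : Fin n) : row3 a b c ∘ upMap k = row2 a b := by
  ext (i | i) <;> rfl

theorem row3_comp_downMap (a b c : Fin n) : row3 a b c ∘ downMap k = row2 b c := by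
  ext (i | i) <;> rfl

theorem row3_comp_outMap (a b c : Fin n) : row3 a b c ∘ outMap k = row2 a c := by
  ext (i | i) <;> rfl

theorem nc_map_row2 {a b : Fin n} (hab : a ≠ b) (s : Pk k) :
    nc (s.map (row2 a b)) + 2 * k = nc s + n * k := by
  have := nc_map (row2_injective hab) s
  simp only [Nat.card_sum, Nat.card_prod, Nat.card_fin] at this
  linarith

theorem nc_map_row3 {a b c : Fin n} (hab : a ≠ b) (hac : a ≠ c) (hbc : b ≠ c)
    (s : Setoid (Fin k ⊕ (Fin k ⊕ Fin k))) :
    nc (s.map (row3 a b c)) + 3 * k = nc s + n * k := by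
  have := nc_map (row3_injective hab hac hbc) s
  simp only [Nat.card_sum, Nat.card_prod, Nat.card_fin] at this
  linarith

end Rows

section FourRows

variable (p c c' : Pk k)

def stackSetoid₃ : Setoid (Fin 4 × Fin k) :=
  c'.map (row2 (0 : Fin 4) 1) ⊔ c.map (row2 1 2) ⊔ p.map (row2 2 3)

theorem stackSetoid_map_row3_123 :
    (stackSetoid p c).map (row3 (1 : Fin 4) 2 3) = c.map (row2 1 2) ⊔ p.map (row2 2 3) := by
  rw [stackSetoid_map, row3_comp_upMap, row3_comp_downMap]

theorem stackSetoid_map_row3_012 :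
    (stackSetoid c c').map (row3 (0 : Fin 4) 1 2) = c'.map (row2 0 1) ⊔ c.map (row2 1 2) := by
  rw [stackSetoid_map, row3_comp_upMap, row3_comp_downMap]

theorem comp_eq_comap_row2_13 :
    comp p c = (c.map (row2 (1 : Fin 4) 2) ⊔ p.map (row2 2 3)).comap (row2 1 3) := by
  rw [comp_eq_comap_map (f := row3 (1 : Fin 4) 2 3)
      (row3_injective (by decide) (by decide) (by decide)),
    stackSetoid_map_row3_123, row3_comp_outMap]

theorem stackSetoid_comp_left_eq_comap :
    stackSetoid (comp p c) c' = (stackSetoid₃ p c c').comap (row3 0 1 3) := by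
  have hpb : (c.map (row2 (1 : Fin 4) 2) ⊔ p.map (row2 2 3)).comap (row3 0 1 3) =
      (comp p c).map (downMap k) := by
    rw [← stackSetoid_map_row3_123, comp_eq_comap]
    refine Setoid.comap_map_of_pullback (row3_injective (by decide) (by decide) (by decide))
      (row3_injective (by decide) (by decide) (by decide)) (by ext (i | i) <;> rfl) ?_ _
    rintro (i | i | i) (j | j | j) h <;> simp [row3, row2] at h
    · exact ⟨inl i, rfl, h ▸ rfl⟩
    · exact ⟨inr i, rfl, h ▸ rfl⟩
  rw [stackSetoid_eq, ← hpb, ← Setoid.comap_map_sup, Setoid.map_map, row3_comp_upMap,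
    stackSetoid₃, sup_assoc]

theorem stackSetoid_comp_right_eq_comap :
    stackSetoid p (comp c c') = (stackSetoid₃ p c c').comap (row3 0 2 3) := by
  have hpb : (c'.map (row2 (0 : Fin 4) 1) ⊔ c.map (row2 1 2)).comap (row3 0 2 3) =
      (comp c c').map (upMap k) := by
    rw [← stackSetoid_map_row3_012, comp_eq_comap]
    refine Setoid.comap_map_of_pullback (row3_injective (by decide) (by decide) (by decide))
      (row3_injective (by decide) (by decide) (by decide)) (by ext (i | i) <;> rfl) ?_ _
    rintro (i | i | i) (j | j | j) h <;> simp [row3, row2] at h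
    · exact ⟨inl i, rfl, h ▸ rfl⟩
    · exact ⟨inr i, rfl, h ▸ rfl⟩
  rw [stackSetoid_eq, ← hpb, sup_comm, ← Setoid.comap_map_sup, Setoid.map_map,
    row3_comp_downMap, stackSetoid₃, sup_comm]

theorem comp_assoc : comp (comp p c) c' = comp p (comp c c') :=
  calc comp (comp p c) c' = (stackSetoid₃ p c c').comap (row3 0 1 3 ∘ outMap k) := by
        rw [comp_eq_comap, stackSetoid_comp_left_eq_comap, Setoid.comap_comp]
    _ = (stackSetoid₃ p c c').comap (row3 0 2 3 ∘ outMap k) := by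
        rw [row3_comp_outMap, row3_comp_outMap]
    _ = comp p (comp c c') := by
        rw [comp_eq_comap p, stackSetoid_comp_right_eq_comap, Setoid.comap_comp]

end FourRows

theorem ncOff_stackSetoid₃_le (p c c' : Pk k) :
    ncOff (stackSetoid₃ p c c') (Set.range (row3 0 2 3)) ≤ kappaP c c' := by
  rw [kappaP_eq_ncOff]
  refine ncOff_le_ncOff (g := row3 0 1 2) (Setoid.le_comap_map.trans (Setoid.comap_mono ?_)) ?_ ?_
  · exact stackSetoid_map_row3_012 c c' ▸ le_sup_left
  · rintro _ ⟨z, rfl⟩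
    exact ⟨upMap k z, by rcases z with i | i <;> rfl⟩
  · rintro ⟨r, i⟩ hx
    fin_cases r
    · exact absurd ⟨inl i, rfl⟩ hx
    · exact ⟨inr (inl i), rfl⟩
    · exact absurd ⟨inr (inl i), rfl⟩ hx
    · exact absurd ⟨inr (inr i), rfl⟩ hx

/-- By `nc_stackSetoid` this says `κ(p,c) + κ(p∘c,c') ≤ κ(p,c∘c') + κ(c,c')`; both sides count
the blocks of `stackSetoid₃ p c c'` inside its two middle rows. -/
theorem nc_stackSetoid_cocycle (p c c' : Pk k) :
    nc (stackSetoid p c) + nc (stackSetoid (comp p c) c') + nc (comp c c') ≤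
      nc (comp p c) + nc (stackSetoid p (comp c c')) + nc (stackSetoid c c') := by
  set C' := c'.map (row2 (0 : Fin 4) 1)
  set C := c.map (row2 (1 : Fin 4) 2)
  set P := p.map (row2 (2 : Fin 4) 3)
  set Ppc := (comp p c).map (row2 (1 : Fin 4) 3)
  have hle : Ppc ≤ C ⊔ P := Setoid.map_le_iff_le_comap.2 (comp_eq_comap_row2_13 p c).le
  have hsub := nc_sup_add_nc_sup_le Ppc C' (C ⊔ P)
  rw [sup_eq_right.2 hle, show Ppc ⊔ C' ⊔ (C ⊔ P) = C' ⊔ (Ppc ⊔ (C ⊔ P)) by ac_rfl,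
    sup_eq_right.2 hle, ← sup_assoc] at hsub
  have h₁ : nc (Ppc ⊔ C') + 3 * k = nc (stackSetoid (comp p c) c') + 4 * k := by
    have := nc_map_row3 (a := (0 : Fin 4)) (b := 1) (c := 3) (by decide) (by decide) (by decide)
      (stackSetoid (comp p c) c')
    rwa [stackSetoid_map, row3_comp_upMap, row3_comp_downMap, sup_comm] at this
  have h₂ : nc (C ⊔ P) + 3 * k = nc (stackSetoid p c) + 4 * k := by
    have := nc_map_row3 (a := (1 : Fin 4)) (b := 2) (c := 3) (by decide) (by decide) (by decide)
      (stackSetoid p c)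
    rwa [stackSetoid_map_row3_123] at this
  have h₃ : nc Ppc + 2 * k = nc (comp p c) + 4 * k :=
    nc_map_row2 (a := (1 : Fin 4)) (b := 3) (by decide) (comp p c)
  have hJ : nc (C' ⊔ C ⊔ P) =
      nc (stackSetoid p (comp c c')) + ncOff (C' ⊔ C ⊔ P) (Set.range (row3 0 2 3)) := by
    rw [stackSetoid_comp_right_eq_comap]
    exact nc_eq_nc_comap_add_ncOff _ _
  have hoff : ncOff (C' ⊔ C ⊔ P) (Set.range (row3 0 2 3)) ≤ kappaP c c' :=
    ncOff_stackSetoid₃_le p c c'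
  have hκ := nc_stackSetoid c c'
  omega

theorem eta_comp_add_eta_le (p c c' : Pk k) :
    eta p (comp c c') + eta c c' ≤ eta p c + eta (comp p c) c' := by
  have h := nc_stackSetoid_cocycle p c c'
  rw [eta_eq, eta_eq, eta_eq, eta_eq, comp_assoc]
  push_cast
  linarith [(by exact_mod_cast h : (nc (stackSetoid p c) : ℚ) + nc (stackSetoid (comp p c) c') +
    nc (comp c c') ≤ nc (comp p c) + nc (stackSetoid p (comp c c')) + nc (stackSetoid c c'))]

theorem prec_trans {p p' p'' : Pk k} (h₁ : prec p p') (h₂ : prec p' p'') : prec p p'' := by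
  obtain ⟨c, rfl, hc⟩ := h₁
  obtain ⟨c', rfl, hc'⟩ := h₂
  refine ⟨comp c c', (comp_assoc p c c').symm, le_antisymm ?_ (eta_nonneg _ _)⟩
  linarith [eta_comp_add_eta_le p c c', eta_nonneg c c']

theorem statement18_general (k : ℕ) :
    (∀ p : Pk k, prec p p) ∧
    (∀ p p' : Pk k, prec p' p → prec p p' → p = p') ∧
    (∀ p p' p'' : Pk k, prec p p' → prec p' p'' → prec p p'') ∧
    (∀ p p' : Pk k, prec p' p → geoLE (idk k) p' p) :=
  ⟨prec_refl, fun _ _ => prec_antisymm, fun _ _ _ => prec_trans, fun _ _ => geoLE_of_prec⟩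

/-- The relation `≺` (admissible prefix) is a partial order on `P_k`:
reflexive, antisymmetric and transitive; moreover `p' ≺ p` implies `p' ≤ p` for the
geodesic order. -/
theorem statement18 (k : ℕ) (hk : 0 < k) :
    (∀ p : Pk k, prec p p) ∧
    (∀ p p' : Pk k, prec p' p → prec p p' → p = p') ∧
    (∀ p p' p'' : Pk k, prec p p' → prec p' p'' → prec p p'') ∧
    (∀ p p' : Pk k, prec p' p → geoLE (idk k) p' p) :=
  statement18_general k

end PartitionPaper
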